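/- arXiv:1607.08803 — 2 statements merged into one kernel-verified Lean document; each statement's English description precedes it below -/
import Mathlib

section
/- Let m > 0, let N ≥ 2 be an integer, let p̄ > 1 and Λ > 0, and set C = Λ (N ω_N^{1/N})^{p̄}, where ω_N is the Lebesgue measure of the unit ball of ℝ^N. Let γ, γ̃ : ℝ → ℝ be continuous strictly increasing functions with γ(0) = γ̃(0) = 0 such that γ̃ = ρ ∘ γ for some 1-Lipschitz function ρ : ℝ → ℝ. Let B, B̃ : [0,m] → ℝ be C¹ functions with B(0) = B̃(0) = 0 and B'(m) = B̃'(m) = 0, whose derivatives B' and B̃' are nonnegative and nonincreasing, and such that the functions s ↦ γ(B'(s)) and s ↦ γ̃(B̃'(s)) are locally Lipschitz on (0,m) with almost everywhere nonpositive derivatives. Let F, F̃ : [0,m] → ℝ be continuous functions such that, for almost every s ∈ (0,m), C · s^{p̄(N−1)/N} · (−(γ ∘ B')'(s))^{p̄−1} + B(s) ≤ F(s) and C · s^{p̄(N−1)/N} · (−(γ̃ ∘ B̃')'(s))^{p̄−1} + B̃(s) = F̃(s). Then sup_{s ∈ [0,m]} max(B(s) − B̃(s), 0) ≤ sup_{s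 ∈ [0,m]} max(F(s) − F̃(s), 0). -/
open MeasureTheory Set NNReal Filter Topology ENNReal

/-- Gluing two Lipschitz estimates on adjacent intervals. -/
lemma myLipGlue {f : ℝ → ℝ} {K₁ K₂ : ℝ≥0} {a t c : ℝ}
    (hat : a ≤ t) (htc : t ≤ c)
    (h1 : LipschitzOnWith K₁ f (Icc a t)) (h2 : LipschitzOnWith K₂ f (Icc t c)) :
    LipschitzOnWith (max K₁ K₂) f (Icc a c) := by
  apply LipschitzOnWith.of_dist_le_mul
  have key : ∀ x ∈ Icc a c, ∀ y ∈ Icc a c, x ≤ y →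
      dist (f x) (f y) ≤ (max K₁ K₂ : ℝ≥0) * dist x y := by
    intro x hx y hy hxy
    have hK1 : (K₁ : ℝ) ≤ (max K₁ K₂ : ℝ≥0) := by exact_mod_cast le_max_left K₁ K₂
    have hK2 : (K₂ : ℝ) ≤ (max K₁ K₂ : ℝ≥0) := by exact_mod_cast le_max_right K₁ K₂
    rcases le_total y t with hyt | hty
    · have := h1.dist_le_mul x ⟨hx.1, hxy.trans hyt⟩ y ⟨hy.1, hyt⟩
      exact this.trans (by nlinarith [dist_nonneg (x := x) (y := y)])
    · rcases le_total t x with htx | hxt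
      · have := h2.dist_le_mul x ⟨htx, hx.2⟩ y ⟨hty, hy.2⟩
        exact this.trans (by nlinarith [dist_nonneg (x := x) (y := y)])
      · have d1 := h1.dist_le_mul x ⟨hx.1, hxt⟩ t ⟨hat, le_rfl⟩
        have d2 := h2.dist_le_mul t ⟨le_rfl, htc⟩ y ⟨hty, hy.2⟩
        have htr := dist_triangle (f x) (f t) (f y)
        have e1 : dist x t = t - x := by rw [Real.dist_eq, abs_of_nonpos (by linarith)]; ring
        have e2 : dist t y = y - t := by rw [Real.dist_eq, abs_of_nonpos (by linarith)]; ring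
        have e3 : dist x y = y - x := by rw [Real.dist_eq, abs_of_nonpos (by linarith)]; ring
        rw [e1] at d1; rw [e2] at d2; rw [e3]
        nlinarith [K₁.coe_nonneg, K₂.coe_nonneg]
  intro x hx y hy
  rcases le_total x y with hxy | hyx
  · exact key x hx y hy hxy
  · rw [dist_comm (f x), dist_comm x]; exact key y hy x hx hyx

/-- A function locally Lipschitz along a compact interval is Lipschitz on it. -/
lemma myLipOfLocal {f : ℝ → ℝ} {a b : ℝ} (hab : a ≤ b)
    (H : ∀ x ∈ Icc a b, ∃ ε > (0:ℝ), ∃ K : ℝ≥0,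
      LipschitzOnWith K f (Icc (x - ε) (x + ε) ∩ Icc a b)) :
    ∃ K : ℝ≥0, LipschitzOnWith K f (Icc a b) := by
  set T : Set ℝ := {t | t ∈ Icc a b ∧ ∃ K : ℝ≥0, LipschitzOnWith K f (Icc a t)} with hT
  have haT : a ∈ T := by
    refine ⟨⟨le_rfl, hab⟩, 0, ?_⟩
    intro x hx y hy
    rw [Icc_self, mem_singleton_iff] at hx hy
    subst hx; subst hy; simp
  have hTne : T.Nonempty := ⟨a, haT⟩
  have hTbdd : BddAbove T := ⟨b, fun t ht => ht.1.2⟩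
  set c := sSup T with hc
  have hcmem : c ∈ Icc a b := ⟨le_csSup hTbdd haT, csSup_le hTne fun t ht => ht.1.2⟩
  obtain ⟨ε, hε, K₀, hK₀⟩ := H c hcmem
  obtain ⟨t, htT, htgt⟩ := exists_lt_of_lt_csSup hTne (show c - ε < c by linarith)
  have htle : t ≤ c := le_csSup hTbdd htT
  obtain ⟨K₁, hK₁⟩ := htT.2
  set c' := min (c + ε) b with hc'
  have hcc' : c ≤ c' := le_min (by linarith) hcmem.2
  have htc' : t ≤ c' := htle.trans hcc'
  have hsub : Icc t c' ⊆ Icc (c - ε) (c + ε) ∩ Icc a b := by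
    intro y hy
    exact ⟨⟨le_trans (by linarith) hy.1, hy.2.trans (min_le_left _ _)⟩,
      ⟨htT.1.1.trans hy.1, hy.2.trans (min_le_right _ _)⟩⟩
  have hK₀' : LipschitzOnWith K₀ f (Icc t c') := hK₀.mono hsub
  have hc'T : c' ∈ T :=
    ⟨⟨htT.1.1.trans htc', min_le_right _ _⟩, max K₁ K₀, myLipGlue htT.1.1 htc' hK₁ hK₀'⟩
  have hc'le : c' ≤ c := le_csSup hTbdd hc'T
  have hcb : c = b := by
    rcases lt_or_ge c b with hlt | hle
    · exfalso
      have : c < c' := lt_min (by linarith) hlt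
      linarith
    · exact le_antisymm hcmem.2 hle
  have : c' = b := le_antisymm (min_le_right _ _) (hcb ▸ hcc')
  obtain ⟨K, hK⟩ := hc'T.2
  exact ⟨K, this ▸ hK⟩

/-- FTC for an antitone Lipschitz function with a.e. derivative. -/
lemma myAntitoneFTC {w Dw : ℝ → ℝ} {a b : ℝ} (hab : a < b) {K : ℝ≥0}
    (hlip : LipschitzOnWith K w (Icc a b))
    (hanti : AntitoneOn w (Icc a b))
    (hw : ∀ᵐ x ∂(volume.restrict (Ioo a b)), HasDerivAt w (Dw x) x) :
    IntegrableOn (fun x => -Dw x) (Ioc a b) volume ∧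
      w a - w b = ∫ x in Ioc a b, (-Dw x) := by
  classical
  set c : ℝ → ℝ := fun x => max a (min x b) with hcdef
  have hcmem : ∀ x, c x ∈ Icc a b := fun x =>
    ⟨le_max_left _ _, max_le hab.le (min_le_right x b)⟩
  have hcmono : Monotone c := fun x y hxy =>
    max_le_max le_rfl (min_le_min hxy le_rfl)
  have hclip : LipschitzWith 1 c := (LipschitzWith.id.min_const b).const_max a
  have hcid : ∀ x ∈ Icc a b, c x = x := fun x hx => by
    simp only [hcdef]; rw [min_eq_left hx.2, max_eq_right hx.1]
  set g : ℝ → ℝ := fun x => -(w (c x)) with hgdef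
  have hgmono : Monotone g := fun x y hxy =>
    neg_le_neg (hanti (hcmem x) (hcmem y) (hcmono hxy))
  have hgcont : Continuous g := by
    have : Continuous fun x => w (c x) :=
      hlip.continuousOn.comp_continuous hclip.continuous hcmem
    exact this.neg
  set fS : StieltjesFunction ℝ := ⟨g, hgmono, fun x => (hgcont.continuousAt).continuousWithinAt⟩
    with hfS
  have hfS_apply : ∀ x, fS x = g x := fun x => rfl
  set μ := fS.measure with hμ
  -- finiteness
  have htb : Tendsto g atBot (𝓝 (-(w a))) := by
    apply Tendsto.congr' _ tendsto_const_nhds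
    filter_upwards [Iic_mem_atBot a] with x (hx : x ≤ a)
    simp only [hgdef, hcdef]
    rw [min_eq_left (hx.trans hab.le), max_eq_left hx]
  have htt : Tendsto g atTop (𝓝 (-(w b))) := by
    apply Tendsto.congr' _ tendsto_const_nhds
    filter_upwards [Ici_mem_atTop b] with x (hx : b ≤ x)
    simp only [hgdef, hcdef]
    rw [min_eq_right hx, max_eq_right hab.le]
  have hfin : IsFiniteMeasure μ :=
    ⟨by rw [fS.measure_univ htb htt]; exact ENNReal.ofReal_lt_top⟩
  -- g is globally K-Lipschitz
  have hgl : ∀ x y, x ≤ y → g y - g x ≤ (K : ℝ) * (y - x) := by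
    intro x y hxy
    have hd := hlip.dist_le_mul (c x) (hcmem x) (c y) (hcmem y)
    have hd2 : dist (c x) (c y) ≤ dist x y := by
      simpa using hclip.dist_le_mul x y
    have : dist (g x) (g y) = dist (w (c x)) (w (c y)) := by
      simp only [hgdef]; rw [dist_neg_neg]
    have hb1 : dist (g x) (g y) ≤ (K : ℝ) * dist x y := by
      rw [this]
      exact hd.trans (mul_le_mul_of_nonneg_left hd2 K.coe_nonneg)
    have hxy' : dist x y = y - x := by rw [Real.dist_eq, abs_of_nonpos (by linarith)]; ring
    rw [Real.dist_eq, hxy'] at hb1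
    have := abs_le.mp hb1
    linarith [this.1]
  -- absolute continuity of μ
  set g2 : ℝ → ℝ := fun x => (K : ℝ) * x - g x with hg2def
  have hg2mono : Monotone g2 := by
    intro x y hxy
    have := hgl x y hxy
    simp only [hg2def]; linarith
  set fS2 : StieltjesFunction ℝ :=
    ⟨g2, hg2mono, fun x => (((continuous_const.mul continuous_id).sub hgcont).continuousAt).continuousWithinAt⟩
  set fK : StieltjesFunction ℝ :=
    ⟨fun x => (K : ℝ) * x, fun x y hxy => by dsimp; nlinarith [K.coe_nonneg],
     fun x => ((continuous_const.mul continuous_id).continuousAt).continuousWithinAt⟩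
  have hsum : fK.measure = μ + fS2.measure := by
    refine MeasureTheory.Measure.ext_of_Ioc _ _ fun x y hxy => ?_
    rw [Measure.add_apply, fK.measure_Ioc, fS.measure_Ioc, fS2.measure_Ioc,
      ← ENNReal.ofReal_add (sub_nonneg.2 (hgmono hxy.le)) (sub_nonneg.2 (hg2mono hxy.le))]
    congr 1
    show (K : ℝ) * y - (K : ℝ) * x = (fS y - fS x) + (g2 y - g2 x)
    rw [hfS_apply, hfS_apply]
    simp only [hg2def]; ring
  have hKvol : fK.measure = ((K : ℝ≥0∞)) • (volume : Measure ℝ) := by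
    refine MeasureTheory.Measure.ext_of_Ioc _ _ fun x y hxy => ?_
    rw [fK.measure_Ioc, Measure.smul_apply, Real.volume_Ioc, smul_eq_mul]
    show ENNReal.ofReal ((K:ℝ) * y - (K:ℝ) * x) = _
    rw [show (K:ℝ) * y - (K:ℝ) * x = (K:ℝ) * (y - x) by ring,
      ENNReal.ofReal_mul K.coe_nonneg, ENNReal.ofReal_coe_nnreal]
  have hac : μ ≪ (volume : Measure ℝ) := by
    refine Measure.AbsolutelyContinuous.mk fun s _ hs0 => ?_
    have h1 : μ s ≤ fK.measure s := by
      rw [hsum, Measure.add_apply]; exact le_self_add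
    rw [hKvol, Measure.smul_apply, smul_eq_mul, hs0, mul_zero] at h1
    exact le_antisymm h1 zero_le
  haveI := hfin
  -- a.e. identification of the RN derivative with -Dw on (a,b)
  have hae : ∀ᵐ x ∂(volume.restrict (Ioo a b)),
      (Measure.rnDeriv μ volume x).toReal = -Dw x := by
    filter_upwards [ae_restrict_of_ae fS.ae_hasDerivAt, hw,
      ae_restrict_mem measurableSet_Ioo] with x h1 h2 hx
    have hE : (fun y => -(w y)) =ᶠ[nhds x] fS := by
      filter_upwards [isOpen_Ioo.mem_nhds hx] with y hy
      show -(w y) = g y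
      simp only [hgdef]
      rw [hcid y ⟨hy.1.le, hy.2.le⟩]
    have h3 : HasDerivAt (fun y => -(w y)) ((Measure.rnDeriv μ volume x).toReal) x :=
      h1.congr_of_eventuallyEq hE
    have h4 : HasDerivAt (fun y => -(w y)) (-Dw x) x := h2.neg
    exact h3.unique h4
  have haeIoc : ∀ᵐ x ∂(volume.restrict (Ioc a b)),
      (Measure.rnDeriv μ volume x).toReal = -Dw x := by
    rwa [← Measure.restrict_congr_set (Ioo_ae_eq_Ioc (μ := volume) (a := a) (b := b))]
  have hint0 : IntegrableOn (fun x => (Measure.rnDeriv μ volume x).toReal) (Ioc a b) volume :=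
    (Measure.integrable_toReal_rnDeriv (μ := μ) (ν := volume)).integrableOn
  have hint : IntegrableOn (fun x => -Dw x) (Ioc a b) volume :=
    hint0.congr_fun_ae haeIoc
  refine ⟨hint, ?_⟩
  have hIeq : ∫ x in Ioc a b, (-Dw x) = ∫ x in Ioc a b, (Measure.rnDeriv μ volume x).toReal :=
    (integral_congr_ae haeIoc).symm
  rw [hIeq, Measure.setIntegral_toReal_rnDeriv hac (Ioc a b), measureReal_def, fS.measure_Ioc,
    ENNReal.toReal_ofReal]
  · rw [hfS_apply, hfS_apply]
    simp only [hgdef]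
    rw [hcid a ⟨le_rfl, hab.le⟩, hcid b ⟨hab.le, le_rfl⟩]
    ring
  · rw [hfS_apply, hfS_apply]
    simp only [hgdef]
    rw [hcid a ⟨le_rfl, hab.le⟩, hcid b ⟨hab.le, le_rfl⟩]
    have := hanti ⟨le_rfl, hab.le⟩ ⟨hab.le, le_rfl⟩ hab.le
    linarith

/-- One-dimensional comparison principle underlying Theorem 3.1:
`‖(B − B̃)₊‖_{L^∞(0,m)} ≤ ‖(F − F̃)₊‖_{L^∞(0,m)}`. -/
theorem comparison_principle_sup
    (m : ℝ) (hm : 0 < m)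
    (N : ℕ) (hN : 2 ≤ N)
    (pbar Λ : ℝ) (hpbar : 1 < pbar) (hΛ : 0 < Λ)
    (ωN C : ℝ)
    (hωN : ωN = (volume (Metric.ball (0 : EuclideanSpace ℝ (Fin N)) 1)).toReal)
    (hC : C = Λ * ((N : ℝ) * ωN ^ ((1 : ℝ) / N)) ^ pbar)
    (γ γt ρ : ℝ → ℝ)
    (hγcont : Continuous γ) (hγmono : StrictMono γ) (hγ0 : γ 0 = 0)
    (hγtcont : Continuous γt) (hγtmono : StrictMono γt) (hγt0 : γt 0 = 0)
    (hρ : LipschitzWith 1 ρ) (hcomp : γt = ρ ∘ γ)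
    -- B, B̃ are C¹ on [0,m] with derivatives B', B̃'
    (B Bt B' Bt' : ℝ → ℝ)
    (hB : ∀ s ∈ Icc (0 : ℝ) m, HasDerivWithinAt B (B' s) (Icc 0 m) s)
    (hBt : ∀ s ∈ Icc (0 : ℝ) m, HasDerivWithinAt Bt (Bt' s) (Icc 0 m) s)
    (hB'cont : ContinuousOn B' (Icc 0 m)) (hBt'cont : ContinuousOn Bt' (Icc 0 m))
    (hB0 : B 0 = 0) (hBt0 : Bt 0 = 0)
    (hB'm : B' m = 0) (hBt'm : Bt' m = 0)
    (hB'nonneg : ∀ s ∈ Icc (0 : ℝ) m, 0 ≤ B' s)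
    (hBt'nonneg : ∀ s ∈ Icc (0 : ℝ) m, 0 ≤ Bt' s)
    (hB'anti : AntitoneOn B' (Icc 0 m)) (hBt'anti : AntitoneOn Bt' (Icc 0 m))
    -- γ ∘ B' and γ̃ ∘ B̃' are locally Lipschitz on (0,m)
    (hlocLip : ∀ s ∈ Ioo (0 : ℝ) m, ∃ ε > (0 : ℝ), ∃ K : ℝ≥0,
      LipschitzOnWith K (fun t => γ (B' t)) (Ioo (s - ε) (s + ε) ∩ Ioo 0 m))
    (hlocLipt : ∀ s ∈ Ioo (0 : ℝ) m, ∃ ε > (0 : ℝ), ∃ K : ℝ≥0,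
      LipschitzOnWith K (fun t => γt (Bt' t)) (Ioo (s - ε) (s + ε) ∩ Ioo 0 m))
    -- with a.e. nonpositive derivatives D, D̃
    (D Dt : ℝ → ℝ)
    (hD : ∀ᵐ s ∂(volume.restrict (Ioo 0 m)),
      HasDerivAt (fun t => γ (B' t)) (D s) s ∧ D s ≤ 0)
    (hDt : ∀ᵐ s ∂(volume.restrict (Ioo 0 m)),
      HasDerivAt (fun t => γt (Bt' t)) (Dt s) s ∧ Dt s ≤ 0)
    (F Ft : ℝ → ℝ)
    (hFcont : ContinuousOn F (Icc 0 m)) (hFtcont : ContinuousOn Ft (Icc 0 m))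
    -- the differential inequality for B, F and the equality for B̃, F̃
    (hineq : ∀ᵐ s ∂(volume.restrict (Ioo 0 m)),
      C * s ^ (pbar * ((N : ℝ) - 1) / N) * (-(D s)) ^ (pbar - 1) + B s ≤ F s)
    (heq : ∀ᵐ s ∂(volume.restrict (Ioo 0 m)),
      C * s ^ (pbar * ((N : ℝ) - 1) / N) * (-(Dt s)) ^ (pbar - 1) + Bt s = Ft s) :
    sSup ((fun s => max (B s - Bt s) 0) '' Icc (0 : ℝ) m) ≤
      sSup ((fun s => max (F s - Ft s) 0) '' Icc (0 : ℝ) m) := by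
  have hmem0 : (0:ℝ) ∈ Icc (0:ℝ) m := ⟨le_rfl, hm.le⟩
  set M' := sSup ((fun s => max (F s - Ft s) 0) '' Icc (0 : ℝ) m) with hM'
  have hωpos : 0 < ωN := by
    rw [hωN]
    refine ENNReal.toReal_pos ?_ ?_
    · exact (Metric.measure_ball_pos volume (0 : EuclideanSpace ℝ (Fin N)) one_pos).ne'
    · exact measure_ball_lt_top.ne
  have hNpos : (0:ℝ) < (N : ℝ) := by
    have : 0 < N := by omega
    exact_mod_cast this
  have hCpos : 0 < C := by
    rw [hC]
    have h1 : (0:ℝ) < (N : ℝ) * ωN ^ ((1 : ℝ) / N) :=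
      mul_pos hNpos (Real.rpow_pos_of_pos hωpos _)
    exact mul_pos hΛ (Real.rpow_pos_of_pos h1 _)
  have hBcont : ContinuousOn B (Icc 0 m) := fun x hx => (hB x hx).continuousWithinAt
  have hBtcont : ContinuousOn Bt (Icc 0 m) := fun x hx => (hBt x hx).continuousWithinAt
  set G₀ : ℝ → ℝ := fun s => B s - Bt s with hG₀
  have hG₀cont : ContinuousOn G₀ (Icc 0 m) := hBcont.sub hBtcont
  have hPcont : ContinuousOn (fun s => max (F s - Ft s) 0) (Icc 0 m) := fun s hs =>
    (((hFcont s hs).sub (hFtcont s hs)).max continuousWithinAt_const)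
  have hbdd : BddAbove ((fun s => max (F s - Ft s) 0) '' Icc (0:ℝ) m) :=
    (isCompact_Icc.image_of_continuousOn hPcont).bddAbove
  have hM0 : 0 ≤ M' := le_trans (le_max_right _ _) (le_csSup hbdd (mem_image_of_mem _ hmem0))
  have hFle : ∀ s ∈ Icc (0:ℝ) m, F s - Ft s ≤ M' := fun s hs =>
    le_trans (le_max_left _ _) (le_csSup hbdd (mem_image_of_mem _ hs))
  have hφ : ∀ x y : ℝ, x ≤ y → γ x - γt x ≤ γ y - γt y := by
    intro x y hxy
    have h1 : |ρ (γ x) - ρ (γ y)| ≤ |γ x - γ y| := by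
      have := hρ.dist_le_mul (γ x) (γ y)
      simpa [Real.dist_eq] using this
    have h2 : |γ x - γ y| = γ y - γ x := by
      rw [abs_sub_comm, abs_of_nonneg (sub_nonneg.2 (hγmono.monotone hxy))]
    have h3 : γt y - γt x = ρ (γ y) - ρ (γ x) := by simp [hcomp, Function.comp]
    have h4 := (abs_le.mp (h2 ▸ h1)).1
    linarith
  set u : ℝ → ℝ := fun t => γ (B' t) with hu
  set v : ℝ → ℝ := fun t => γt (Bt' t) with hv
  set ψ : ℝ → ℝ := fun t => u t - v t with hψ
  have hcont_ψ : ContinuousOn ψ (Icc 0 m) :=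
    (hγcont.comp_continuousOn hB'cont).sub (hγtcont.comp_continuousOn hBt'cont)
  have key : ∀ s ∈ Icc (0:ℝ) m, B s - Bt s ≤ M' := by
    by_contra hcon
    push_neg at hcon
    obtain ⟨sstar, hsstar, hgt⟩ := hcon
    obtain ⟨s₀, hs₀mem, hs₀max⟩ := isCompact_Icc.exists_isMaxOn (nonempty_Icc.2 hm.le) hG₀cont
    have hG₀s₀ : M' < G₀ s₀ := lt_of_lt_of_le hgt (hs₀max hsstar)
    have hs₀pos : 0 < s₀ := by
      rcases hs₀mem.1.lt_or_eq with hlt | heq0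
      · exact hlt
      · exfalso
        rw [← heq0] at hG₀s₀
        have : G₀ 0 = 0 := by show B 0 - Bt 0 = 0; rw [hB0, hBt0]; ring
        linarith
    set S : Set ℝ := Icc 0 s₀ ∩ G₀ ⁻¹' (Iic M') with hS
    have hSclosed : IsClosed S :=
      (hG₀cont.mono (Icc_subset_Icc le_rfl hs₀mem.2)).preimage_isClosed_of_isClosed
        isClosed_Icc isClosed_Iic
    have hScompact : IsCompact S := isCompact_Icc.of_isClosed_subset hSclosed inter_subset_left
    have h0S : (0:ℝ) ∈ S := by
      refine ⟨⟨le_rfl, hs₀pos.le⟩, ?_⟩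
      show G₀ 0 ≤ M'
      have : G₀ 0 = 0 := by show B 0 - Bt 0 = 0; rw [hB0, hBt0]; ring
      linarith
    set s₁ := sSup S with hs₁
    have hs₁S : s₁ ∈ S := hScompact.sSup_mem ⟨0, h0S⟩
    have hs₁mem : s₁ ∈ Icc (0:ℝ) s₀ := hs₁S.1
    have hG₀s₁ : G₀ s₁ ≤ M' := hs₁S.2
    have hs₁lt : s₁ < s₀ := lt_of_le_of_ne hs₁mem.2 (fun hh => by rw [hh] at hG₀s₁; linarith)
    have hs₁Icc : s₁ ∈ Icc (0:ℝ) m := ⟨hs₁mem.1, hs₁mem.2.trans hs₀mem.2⟩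
    have habove : ∀ s, s₁ < s → s ≤ s₀ → M' < G₀ s := by
      intro s h1 h2
      by_contra hcc
      push_neg at hcc
      have hmemS : s ∈ S := ⟨⟨hs₁mem.1.trans h1.le, h2⟩, hcc⟩
      exact absurd (le_csSup hScompact.bddAbove hmemS) (not_le.2 h1)
    have hderiv1 : Bt' s₁ ≤ B' s₁ := by
      have hd : HasDerivWithinAt G₀ (B' s₁ - Bt' s₁) (Ioc s₁ s₀) s₁ :=
        ((hB s₁ hs₁Icc).sub (hBt s₁ hs₁Icc)).mono
          (fun y hy => ⟨hs₁mem.1.trans hy.1.le, hy.2.trans hs₀mem.2⟩)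
      have hns : s₁ ∉ Ioc s₁ s₀ := fun hh => lt_irrefl _ hh.1
      rw [hasDerivWithinAt_iff_tendsto_slope' hns] at hd
      haveI : (𝓝[Ioc s₁ s₀] s₁).NeBot := by
        rw [nhdsWithin_Ioc_eq_nhdsGT hs₁lt]; infer_instance
      have hge : (0:ℝ) ≤ B' s₁ - Bt' s₁ := by
        refine ge_of_tendsto hd ?_
        filter_upwards [eventually_mem_nhdsWithin] with y hy
        rw [slope_def_field]
        apply div_nonneg _ (by linarith [hy.1] : (0:ℝ) ≤ y - s₁)
        have := habove y hy.1 hy.2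
        linarith
      linarith
    have hderiv0 : B' s₀ ≤ Bt' s₀ := by
      rcases hs₀mem.2.lt_or_eq with hlt | heqm
      · have hnh : Icc (0:ℝ) m ∈ 𝓝 s₀ := Icc_mem_nhds hs₀pos hlt
        have hd : HasDerivAt G₀ (B' s₀ - Bt' s₀) s₀ :=
          (((hB s₀ hs₀mem).sub (hBt s₀ hs₀mem))).hasDerivAt hnh
        have hzero := (hs₀max.isLocalMax hnh).hasDerivAt_eq_zero hd
        linarith
      · rw [heqm, hB'm, hBt'm]
    have hstruct : ψ s₀ ≤ ψ s₁ := by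
      have e1 : γ (Bt' s₁) - γt (Bt' s₁) ≤ u s₁ - v s₁ :=
        sub_le_sub_right (hγmono.monotone hderiv1) _
      have e2 : γ (Bt' s₀) - γt (Bt' s₀) ≤ γ (Bt' s₁) - γt (Bt' s₁) :=
        hφ _ _ (hBt'anti hs₁Icc hs₀mem hs₁lt.le)
      have e3 : u s₀ - v s₀ ≤ γ (Bt' s₀) - γt (Bt' s₀) :=
        sub_le_sub_right (hγmono.monotone hderiv0) _
      have eψ₁ : ψ s₁ = u s₁ - v s₁ := rfl
      have eψ₀ : ψ s₀ = u s₀ - v s₀ := rfl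
      linarith
    have claim1 : ∀ a b : ℝ, s₁ < a → a < b → b < s₀ → ψ a < ψ b := by
      intro a b ha hab hb
      have hIccIoo : Icc a b ⊆ Ioo 0 m := fun x hx =>
        ⟨lt_of_le_of_lt hs₁mem.1 (ha.trans_le hx.1), (hx.2.trans_lt hb).trans_le hs₀mem.2⟩
      have hIccm : Icc a b ⊆ Icc (0:ℝ) m := fun x hx =>
        ⟨(hIccIoo hx).1.le, (hIccIoo hx).2.le⟩
      have hlocal : ∀ f : ℝ → ℝ,
          (∀ s ∈ Ioo (0:ℝ) m, ∃ ε > (0:ℝ), ∃ K : ℝ≥0,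
            LipschitzOnWith K f (Ioo (s-ε) (s+ε) ∩ Ioo 0 m)) →
          ∃ K : ℝ≥0, LipschitzOnWith K f (Icc a b) := by
        intro f hf
        refine myLipOfLocal hab.le ?_
        intro x hx
        obtain ⟨ε, hε, K, hK⟩ := hf x (hIccIoo hx)
        refine ⟨ε/2, by linarith, K, hK.mono ?_⟩
        intro y hy
        exact ⟨⟨by linarith [hy.1.1], by linarith [hy.1.2]⟩, hIccIoo hy.2⟩
      obtain ⟨Ku, hKu⟩ := hlocal u hlocLip
      obtain ⟨Kv, hKv⟩ := hlocal v hlocLipt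
      have hUanti : AntitoneOn u (Icc a b) := fun x hx y hy hxy =>
        hγmono.monotone (hB'anti (hIccm hx) (hIccm hy) hxy)
      have hVanti : AntitoneOn v (Icc a b) := fun x hx y hy hxy =>
        hγtmono.monotone (hBt'anti (hIccm hx) (hIccm hy) hxy)
      have hIooIoo : Ioo a b ⊆ Ioo (0:ℝ) m := fun x hx => hIccIoo ⟨hx.1.le, hx.2.le⟩
      have hDu : ∀ᵐ x ∂(volume.restrict (Ioo a b)), HasDerivAt u (D x) x :=
        (ae_restrict_of_ae_restrict_of_subset hIooIoo hD).mono fun x hx => hx.1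
      have hDv : ∀ᵐ x ∂(volume.restrict (Ioo a b)), HasDerivAt v (Dt x) x :=
        (ae_restrict_of_ae_restrict_of_subset hIooIoo hDt).mono fun x hx => hx.1
      obtain ⟨hintU, hU⟩ := myAntitoneFTC hab hKu hUanti hDu
      obtain ⟨hintV, hV⟩ := myAntitoneFTC hab hKv hVanti hDv
      have hIooSub : Ioo a b ⊆ Ioo s₁ s₀ := fun x hx => ⟨ha.trans hx.1, hx.2.trans hb⟩
      have hDgt : ∀ᵐ x ∂(volume.restrict (Ioo a b)), 0 < D x - Dt x := by
        filter_upwards [ae_restrict_of_ae_restrict_of_subset hIooIoo hD,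
          ae_restrict_of_ae_restrict_of_subset hIooIoo hDt,
          ae_restrict_of_ae_restrict_of_subset hIooIoo hineq,
          ae_restrict_of_ae_restrict_of_subset hIooIoo heq,
          ae_restrict_mem measurableSet_Ioo] with s h1 h2 h3 h4 hsmem
        have hsIcc : s ∈ Icc (0:ℝ) m := ⟨(hIooIoo hsmem).1.le, (hIooIoo hsmem).2.le⟩
        have hG₀s : M' < B s - Bt s := habove s (hIooSub hsmem).1 (hIooSub hsmem).2.le
        have hFs : F s - Ft s ≤ M' := hFle s hsIcc
        have hspos : (0:ℝ) < s := (hIooIoo hsmem).1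
        have hcs : 0 < C * s ^ (pbar * ((N:ℝ) - 1) / N) :=
          mul_pos hCpos (Real.rpow_pos_of_pos hspos _)
        have hlt : C * s ^ (pbar * ((N:ℝ) - 1) / N) * (-(D s)) ^ (pbar - 1)
            < C * s ^ (pbar * ((N:ℝ) - 1) / N) * (-(Dt s)) ^ (pbar - 1) := by linarith
        have hltpow : (-(D s)) ^ (pbar - 1) < (-(Dt s)) ^ (pbar - 1) :=
          lt_of_mul_lt_mul_left hlt hcs.le
        by_contra hcon2
        push_neg at hcon2
        have : (-(Dt s)) ^ (pbar - 1) ≤ (-(D s)) ^ (pbar - 1) :=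
          Real.rpow_le_rpow (neg_nonneg.2 h2.2) (by linarith) (by linarith)
        linarith
      have hDgt' : ∀ᵐ x ∂(volume.restrict (Ioc a b)), 0 < D x - Dt x := by
        rwa [← Measure.restrict_congr_set (Ioo_ae_eq_Ioc (μ := volume) (a := a) (b := b))]
      have hintDiff : IntegrableOn (fun x => D x - Dt x) (Ioc a b) volume :=
        (hintV.sub hintU).congr (Filter.Eventually.of_forall fun x => by simp only [Pi.sub_apply]; ring)
      have hposint : 0 < ∫ x in Ioc a b, (D x - Dt x) := by
        have hnn : (0 : ℝ → ℝ) ≤ᵐ[volume.restrict (Ioc a b)] fun x => D x - Dt x := by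
          filter_upwards [hDgt'] with x hx
          simpa using hx.le
        refine (integral_pos_iff_support_of_nonneg_ae hnn hintDiff).mpr ?_
        have hnull : (volume.restrict (Ioc a b)) {x | ¬ (0 < D x - Dt x)} = 0 :=
          ae_iff.mp hDgt'
        have hcsub : (Function.support fun x => D x - Dt x)ᶜ ⊆ {x | ¬ (0 < D x - Dt x)} := by
          intro x hx
          simp only [Function.mem_support, not_not, mem_compl_iff] at hx
          simp only [mem_setOf_eq, not_lt]
          linarith
        have hcompl0 : (volume.restrict (Ioc a b))
            (Function.support fun x => D x - Dt x)ᶜ = 0 := measure_mono_null hcsub hnull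
        have huniv : (volume.restrict (Ioc a b)) univ = ENNReal.ofReal (b - a) := by
          rw [Measure.restrict_apply_univ, Real.volume_Ioc]
        have hle : (volume.restrict (Ioc a b)) univ ≤
            (volume.restrict (Ioc a b)) (Function.support fun x => D x - Dt x) := by
          calc (volume.restrict (Ioc a b)) univ
              = (volume.restrict (Ioc a b))
                ((Function.support fun x => D x - Dt x) ∪
                  (Function.support fun x => D x - Dt x)ᶜ) := by rw [union_compl_self]
            _ ≤ (volume.restrict (Ioc a b)) (Function.support fun x => D x - Dt x) +
                (volume.restrict (Ioc a b)) (Function.support fun x => D x - Dt x)ᶜ :=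
                measure_union_le _ _
            _ = (volume.restrict (Ioc a b)) (Function.support fun x => D x - Dt x) := by
                rw [hcompl0, add_zero]
        refine lt_of_lt_of_le ?_ hle
        rw [huniv]
        exact ENNReal.ofReal_pos.mpr (by linarith)
      have hsum2 : (∫ x in Ioc a b, (-Dt x)) - ∫ x in Ioc a b, (-D x)
          = ∫ x in Ioc a b, (D x - Dt x) := by
        rw [← integral_sub hintV hintU]
        exact integral_congr_ae (Filter.Eventually.of_forall fun x => by ring)
      have eψa : ψ a = u a - v a := rfl
      have eψb : ψ b = u b - v b := rfl
      linarith
    set a₀ := s₁ + (s₀ - s₁)/3 with ha₀def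
    set b₀ := s₁ + 2*(s₀ - s₁)/3 with hb₀def
    have ha₀ : s₁ < a₀ := by rw [ha₀def]; linarith
    have hab₀ : a₀ < b₀ := by rw [ha₀def, hb₀def]; linarith
    have hb₀ : b₀ < s₀ := by rw [hb₀def]; linarith
    have hA : ψ s₁ ≤ ψ a₀ := by
      have hsubset : Ioo s₁ a₀ ⊆ Icc (0:ℝ) m := fun x hx =>
        ⟨hs₁mem.1.trans hx.1.le, ((hx.2.trans (hab₀.trans hb₀)).le).trans hs₀mem.2⟩
      have hT : Tendsto ψ (𝓝[Ioo s₁ a₀] s₁) (𝓝 (ψ s₁)) :=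
        (hcont_ψ s₁ hs₁Icc).mono hsubset
      haveI : (𝓝[Ioo s₁ a₀] s₁).NeBot := by
        rw [nhdsWithin_Ioo_eq_nhdsGT ha₀]; infer_instance
      refine le_of_tendsto hT ?_
      filter_upwards [eventually_mem_nhdsWithin] with t ht
      exact (claim1 t a₀ ht.1 ht.2 (hab₀.trans hb₀)).le
    have hBb : ψ b₀ ≤ ψ s₀ := by
      have hsubset : Ioo b₀ s₀ ⊆ Icc (0:ℝ) m := fun x hx =>
        ⟨(hs₁mem.1.trans ((ha₀.trans hab₀).trans hx.1).le), hx.2.le.trans hs₀mem.2⟩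
      have hT : Tendsto ψ (𝓝[Ioo b₀ s₀] s₀) (𝓝 (ψ s₀)) :=
        (hcont_ψ s₀ hs₀mem).mono hsubset
      haveI : (𝓝[Ioo b₀ s₀] s₀).NeBot := by
        rw [nhdsWithin_Ioo_eq_nhdsLT hb₀]; infer_instance
      refine ge_of_tendsto hT ?_
      filter_upwards [eventually_mem_nhdsWithin] with t ht
      exact (claim1 b₀ t (ha₀.trans hab₀) ht.1 ht.2).le
    have hmid : ψ a₀ < ψ b₀ := claim1 a₀ b₀ ha₀ hab₀ hb₀
    linarith
  refine csSup_le (Set.Nonempty.image _ (nonempty_Icc.2 hm.le)) ?_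
  rintro y ⟨s, hs, rfl⟩
  exact max_le (key s hs) hM0
end

section
/- Let m > 0, let N ≥ 2 be an integer, let p̄ > 1 and Λ > 0, and set C = Λ (N ω_N^{1/N})^{p̄}, where ω_N is the Lebesgue measure of the unit ball of ℝ^N. Let γ, γ̃ : ℝ → ℝ be continuous strictly increasing functions with γ(0) = γ̃(0) = 0 such that γ̃ = ρ ∘ γ for some 1-Lipschitz function ρ : ℝ → ℝ. Let B, B̃ : [0,m] → ℝ be C¹ functions with B(0) = B̃(0) = 0 and B'(m) = B̃'(m) = 0, whose derivatives B' and B̃' are nonnegative and nonincreasing, and such that the functions s ↦ γ(B'(s)) and s ↦ γ̃(B̃'(s)) are locally Lipschitz on (0,m) with almost everywhere nonpositive derivatives. Let F, F̃ : [0,m] → ℝ be continuous functions such that, for almost every s ∈ (0,m), C · s^{p̄(N−1)/N} · (−(γ ∘ B')'(s))^{p̄−1} + B(s) ≤ F(s) and C · s^{p̄(N−1)/N} · (−(γ̃ ∘ B̃')'(s))^{p̄−1} + B̃(s) = F̃(s). If moreover F(s) ≤ F̃(s) for every s ∈ [0,m], then B(s) ≤ B̃(s) for every s ∈ [0,m].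 -/
open MeasureTheory Set NNReal

open Filter Topology

lemma lip_ae_mono_aux {f g : ℝ → ℝ} {K : ℝ≥0} {a b : ℝ} (hab : a ≤ b)
    (hlip : LipschitzOnWith K f (Icc a b))
    (hae : ∀ᵐ x ∂(volume.restrict (Ioo a b)), HasDerivAt f (g x) x ∧ 0 ≤ g x) :
    f a ≤ f b := by
  have key : ∀ ε > (0:ℝ), f a - f b ≤ ε * (b - a + 1) := by
    intro ε hε
    set Kr : ℝ := (K : ℝ) + 1 with hKr
    have hKrpos : 0 < Kr := by positivity
    -- null bad set
    set P : ℝ → Prop := fun x => HasDerivAt f (g x) x ∧ 0 ≤ g x with hP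
    set Eset : Set ℝ := ({x | ¬ P x} ∩ Ioo a b) ∪ {a} with hE
    have hEnull : volume Eset = 0 := by
      have h1 : (volume.restrict (Ioo a b)) {x | ¬ P x} = 0 := hae
      rw [Measure.restrict_apply' measurableSet_Ioo] at h1
      rw [hE]
      refine le_antisymm ?_ zero_le
      refine le_trans (measure_union_le _ _) ?_
      simp [h1]
    have hδpos : (0:ℝ) < ε / Kr := by positivity
    obtain ⟨U, hUE, hUopen, hUvol⟩ :=
      Set.exists_isOpen_lt_of_lt Eset (ENNReal.ofReal (ε / Kr))
        (by rw [hEnull]; exact ENNReal.ofReal_pos.2 hδpos)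
    -- the measure function
    set t : ℝ → ℝ := fun x => (volume (U ∩ Ioo a x)).toReal with ht
    have hfin : ∀ x, volume (U ∩ Ioo a x) ≠ ⊤ :=
      fun x => ((measure_mono inter_subset_left).trans_lt
        (hUvol.trans_le le_top)).ne
    have htmono : Monotone t := by
      intro x y hxy
      exact ENNReal.toReal_mono (hfin y)
        (measure_mono (inter_subset_inter_right _ (Ioo_subset_Ioo le_rfl hxy)))
    have htlip : ∀ x y : ℝ, x ≤ y → t y ≤ t x + (y - x) := by
      intro x y hxy
      have hsub : U ∩ Ioo a y ⊆ (U ∩ Ioo a x) ∪ Ico x y := by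
        rintro z ⟨hzU, hz1, hz2⟩
        rcases lt_or_ge z x with h | h
        · exact Or.inl ⟨hzU, hz1, h⟩
        · exact Or.inr ⟨h, hz2⟩
      have h1 : volume (U ∩ Ioo a y) ≤ volume (U ∩ Ioo a x) + ENNReal.ofReal (y - x) := by
        calc volume (U ∩ Ioo a y) ≤ volume ((U ∩ Ioo a x) ∪ Ico x y) := measure_mono hsub
        _ ≤ volume (U ∩ Ioo a x) + volume (Ico x y) := measure_union_le _ _
        _ = volume (U ∩ Ioo a x) + ENNReal.ofReal (y - x) := by rw [Real.volume_Ico]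
      calc t y ≤ (volume (U ∩ Ioo a x) + ENNReal.ofReal (y - x)).toReal :=
            ENNReal.toReal_mono (ENNReal.add_ne_top.2 ⟨hfin x, ENNReal.ofReal_ne_top⟩) h1
      _ = t x + (y - x) := by
            rw [ENNReal.toReal_add (hfin x) ENNReal.ofReal_ne_top,
              ENNReal.toReal_ofReal (by linarith)]
    have htcont : Continuous t := by
      have : LipschitzWith 1 t := by
        apply LipschitzWith.of_dist_le_mul
        intro x y
        rw [Real.dist_eq, Real.dist_eq, NNReal.coe_one, one_mul]
        rcases le_total x y with h | h
        · rw [abs_of_nonpos (by linarith [htmono h]), abs_of_nonpos (by linarith)]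
          linarith [htlip x y h]
        · rw [abs_of_nonneg (by linarith [htmono h]), abs_of_nonneg (by linarith)]
          linarith [htlip y x h]
      exact this.continuous
    -- apply the fencing theorem
    set f₁ : ℝ → ℝ := fun x => f a - f x - Kr * t x with hf₁
    have main : f₁ b ≤ ε * (b - a) := by
      refine image_le_of_liminf_slope_right_le_deriv_boundary
        (f := f₁) (a := a) (b := b) (B := fun x => ε * (x - a)) (B' := fun _ => ε)
        ?_ ?_ ?_ ?_ ?_ (right_mem_Icc.2 hab)
      · exact (continuousOn_const.sub hlip.continuousOn).sub
          (continuousOn_const.mul htcont.continuousOn)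
      · have h0 : t a = 0 := by simp [ht]
        simp [hf₁, h0]
      · exact (continuous_const.mul (continuous_id.sub continuous_const)).continuousOn
      · intro x hx
        simpa using (((hasDerivWithinAt_id x (Ici x)).sub_const a).const_mul ε)
      · intro x hx r hr
        have hrpos : 0 < r := hε.trans hr
        by_cases hxU : x ∈ U
        · -- inside U : slope ≤ -1 < r
          obtain ⟨η, hη, hball⟩ := Metric.isOpen_iff.1 hUopen x hxU
          have hmem : Ioo x (min (x + η) b) ∈ 𝓝[>] x :=
            Ioo_mem_nhdsGT_of_mem ⟨le_rfl, lt_min (by linarith) hx.2⟩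
          refine Eventually.frequently (eventually_of_mem hmem ?_)
          intro z hz
          have hzx : x < z := hz.1
          have hzb : z ≤ b := (hz.2.trans_le (min_le_right _ _)).le
          have hzη : z < x + η := hz.2.trans_le (min_le_left _ _)
          -- t z - t x ≥ z - x
          have hsub : (U ∩ Ioo a x) ∪ Ioo x z ⊆ U ∩ Ioo a z := by
            rintro w (⟨hwU, hw1, hw2⟩ | ⟨hw1, hw2⟩)
            · exact ⟨hwU, hw1, hw2.trans hzx⟩
            · refine ⟨hball ?_, lt_of_le_of_lt hx.1 hw1, hw2⟩
              rw [Metric.mem_ball, Real.dist_eq, abs_of_pos (by linarith)]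
              linarith
          have hdisj : Disjoint (U ∩ Ioo a x) (Ioo x z) := by
            refine Set.disjoint_left.2 ?_
            rintro w ⟨_, _, hw2⟩ ⟨hw3, _⟩
            exact absurd hw3 (not_lt.2 hw2.le)
          have hvol : volume (U ∩ Ioo a x) + ENNReal.ofReal (z - x) ≤ volume (U ∩ Ioo a z) := by
            rw [← Real.volume_Ioo, ← measure_union hdisj measurableSet_Ioo]
            exact measure_mono hsub
          have htz : t x + (z - x) ≤ t z := by
            have h2 := ENNReal.toReal_mono (hfin z) hvol
            rwa [ENNReal.toReal_add (hfin x) ENNReal.ofReal_ne_top,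
              ENNReal.toReal_ofReal (by linarith)] at h2
          -- f x - f z ≤ K (z - x)
          have hfz : f x - f z ≤ (K : ℝ) * (z - x) := by
            have hd := hlip.dist_le_mul x ⟨hx.1, hx.2.le⟩ z ⟨hx.1.trans hzx.le, hzb⟩
            rw [Real.dist_eq, Real.dist_eq] at hd
            have h2 : |x - z| = z - x := by
              rw [abs_sub_comm]; exact abs_of_pos (by linarith)
            rw [h2] at hd
            calc f x - f z ≤ |f x - f z| := le_abs_self _
            _ ≤ (K : ℝ) * (z - x) := hd
          have hslope : slope f₁ x z ≤ -1 := by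
            rw [slope_def_field, div_le_iff₀ (by linarith : (0:ℝ) < z - x)]
            have hE1 : f₁ z - f₁ x = (f x - f z) - Kr * (t z - t x) := by
              simp only [hf₁]; ring
            have h3 : Kr * (z - x) ≤ Kr * (t z - t x) :=
              mul_le_mul_of_nonneg_left (by linarith) hKrpos.le
            have h4 : (K : ℝ) * (z - x) - Kr * (z - x) = -1 * (z - x) := by
              rw [hKr]; ring
            rw [hE1]
            linarith
          exact hslope.trans_lt (by linarith)
        · -- good point : derivative exists and is ≥ 0
          have hxgood : P x := by
            by_contra hbad
            exact hxU (hUE (Or.inl ⟨hbad, lt_of_le_of_ne hx.1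
              (fun h => hxU (hUE (Or.inr h.symm))), hx.2⟩))
          obtain ⟨hder, hg⟩ := hxgood
          have hts : Tendsto (slope f x) (𝓝[>] x) (𝓝 (g x)) :=
            ((hasDerivAt_iff_tendsto_slope).1 hder).mono_left
              (nhdsWithin_mono _ (fun z hz => ne_of_gt hz))
          have hev : ∀ᶠ z in 𝓝[>] x, slope f x z > -r :=
            hts (Ioi_mem_nhds (by linarith))
          refine Eventually.frequently ((hev.and self_mem_nhdsWithin).mono ?_)
          rintro z ⟨hsz, hzx⟩
          have hzx' : x < z := hzx
          rw [slope_def_field, div_lt_iff₀ (by linarith : (0:ℝ) < z - x)]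
          have h4 : f₁ z - f₁ x = -(f z - f x) - Kr * (t z - t x) := by
            simp only [hf₁]; ring
          rw [h4]
          have h5 : 0 ≤ Kr * (t z - t x) :=
            mul_nonneg hKrpos.le (by linarith [htmono hzx'.le])
          have h6 : -(r * (z - x)) < f z - f x := by
            rw [slope_def_field, gt_iff_lt, lt_div_iff₀ (by linarith : (0:ℝ) < z - x)] at hsz
            linarith
          linarith
    -- conclude
    have htb : t b ≤ ε / Kr := by
      have h1 : volume (U ∩ Ioo a b) ≤ ENNReal.ofReal (ε / Kr) :=
        (measure_mono inter_subset_left).trans hUvol.le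
      calc t b ≤ (ENNReal.ofReal (ε / Kr)).toReal := ENNReal.toReal_mono ENNReal.ofReal_ne_top h1
      _ = ε / Kr := ENNReal.toReal_ofReal hδpos.le
    have : f a - f b ≤ ε * (b - a) + Kr * t b := by
      have := main
      simp only [hf₁] at this
      linarith
    have h7 : Kr * t b ≤ ε := by
      calc Kr * t b ≤ Kr * (ε / Kr) := mul_le_mul_of_nonneg_left htb hKrpos.le
      _ = ε := by field_simp
    linarith
  by_contra hcon
  push_neg at hcon
  have hpos : 0 < (f a - f b) / (2 * (b - a + 1)) := by
    have : 0 < b - a + 1 := by linarith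
    have : 0 < f a - f b := by linarith
    positivity
  have hk := key _ hpos
  have hba : (0:ℝ) < b - a + 1 := by linarith
  have heq2 : (f a - f b) / (2 * (b - a + 1)) * (b - a + 1) = (f a - f b) / 2 := by
    field_simp
  rw [heq2] at hk
  linarith

/-- Forward monotonicity propagation. -/
lemma forward_mono_aux {h : ℝ → ℝ} {x y : ℝ} (hxy : x ≤ y)
    (hcont : ContinuousOn h (Icc x y))
    (hloc : ∀ u, x ≤ u → u < y → ∃ z, u < z ∧ z ≤ y ∧ h u ≤ h z) :
    h x ≤ h y := by
  set A : Set ℝ := Icc x y ∩ h ⁻¹' (Ici (h x)) with hA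
  have hclosed : IsClosed A :=
    hcont.preimage_isClosed_of_isClosed isClosed_Icc isClosed_Ici
  have hne : A.Nonempty := ⟨x, ⟨le_rfl, hxy⟩, mem_preimage.2 (mem_Ici.2 le_rfl)⟩
  have hbdd : BddAbove A := ⟨y, fun z hz => hz.1.2⟩
  have humem : sSup A ∈ A := hclosed.csSup_mem hne hbdd
  set u := sSup A with hu
  have huy : u ≤ y := humem.1.2
  rcases eq_or_lt_of_le huy with h1 | h1
  · have h2 := humem.2
    rw [h1] at h2
    exact h2
  · obtain ⟨z, hz1, hz2, hz3⟩ := hloc u humem.1.1 h1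
    have hzA : z ∈ A := ⟨⟨humem.1.1.trans hz1.le, hz2⟩, le_trans humem.2 hz3⟩
    exact absurd (le_csSup hbdd hzA) (not_le.2 hz1)

/-- One-dimensional comparison principle underlying Theorem 3.1:
if F ≤ F̃ on [0,m] then B ≤ B̃ on [0,m] (Corollary 3.2). -/
theorem comparison_principle_pointwise
    (m : ℝ) (hm : 0 < m)
    (N : ℕ) (hN : 2 ≤ N)
    (pbar Λ : ℝ) (hpbar : 1 < pbar) (hΛ : 0 < Λ)
    (ωN C : ℝ)
    (hωN : ωN = (volume (Metric.ball (0 : EuclideanSpace ℝ (Fin N)) 1)).toReal)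
    (hC : C = Λ * ((N : ℝ) * ωN ^ ((1 : ℝ) / N)) ^ pbar)
    (γ γt ρ : ℝ → ℝ)
    (hγcont : Continuous γ) (hγmono : StrictMono γ) (hγ0 : γ 0 = 0)
    (hγtcont : Continuous γt) (hγtmono : StrictMono γt) (hγt0 : γt 0 = 0)
    (hρ : LipschitzWith 1 ρ) (hcomp : γt = ρ ∘ γ)
    -- B, B̃ are C¹ on [0,m] with derivatives B', B̃'
    (B Bt B' Bt' : ℝ → ℝ)
    (hB : ∀ s ∈ Icc (0 : ℝ) m, HasDerivWithinAt B (B' s) (Icc 0 m) s)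
    (hBt : ∀ s ∈ Icc (0 : ℝ) m, HasDerivWithinAt Bt (Bt' s) (Icc 0 m) s)
    (hB'cont : ContinuousOn B' (Icc 0 m)) (hBt'cont : ContinuousOn Bt' (Icc 0 m))
    (hB0 : B 0 = 0) (hBt0 : Bt 0 = 0)
    (hB'm : B' m = 0) (hBt'm : Bt' m = 0)
    (hB'nonneg : ∀ s ∈ Icc (0 : ℝ) m, 0 ≤ B' s)
    (hBt'nonneg : ∀ s ∈ Icc (0 : ℝ) m, 0 ≤ Bt' s)
    (hB'anti : AntitoneOn B' (Icc 0 m)) (hBt'anti : AntitoneOn Bt' (Icc 0 m))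
    -- γ ∘ B' and γ̃ ∘ B̃' are locally Lipschitz on (0,m)
    (hlocLip : ∀ s ∈ Ioo (0 : ℝ) m, ∃ ε > (0 : ℝ), ∃ K : ℝ≥0,
      LipschitzOnWith K (fun t => γ (B' t)) (Ioo (s - ε) (s + ε) ∩ Ioo 0 m))
    (hlocLipt : ∀ s ∈ Ioo (0 : ℝ) m, ∃ ε > (0 : ℝ), ∃ K : ℝ≥0,
      LipschitzOnWith K (fun t => γt (Bt' t)) (Ioo (s - ε) (s + ε) ∩ Ioo 0 m))
    -- with a.e. nonpositive derivatives D, D̃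
    (D Dt : ℝ → ℝ)
    (hD : ∀ᵐ s ∂(volume.restrict (Ioo 0 m)),
      HasDerivAt (fun t => γ (B' t)) (D s) s ∧ D s ≤ 0)
    (hDt : ∀ᵐ s ∂(volume.restrict (Ioo 0 m)),
      HasDerivAt (fun t => γt (Bt' t)) (Dt s) s ∧ Dt s ≤ 0)
    (F Ft : ℝ → ℝ)
    (hFcont : ContinuousOn F (Icc 0 m)) (hFtcont : ContinuousOn Ft (Icc 0 m))
    -- the differential inequality for B, F and the equality for B̃, F̃
    (hineq : ∀ᵐ s ∂(volume.restrict (Ioo 0 m)),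
      C * s ^ (pbar * ((N : ℝ) - 1) / N) * (-(D s)) ^ (pbar - 1) + B s ≤ F s)
    (heq : ∀ᵐ s ∂(volume.restrict (Ioo 0 m)),
      C * s ^ (pbar * ((N : ℝ) - 1) / N) * (-(Dt s)) ^ (pbar - 1) + Bt s = Ft s)
    -- F is dominated by F̃
    (hFle : ∀ s ∈ Icc (0 : ℝ) m, F s ≤ Ft s) :
    ∀ s ∈ Icc (0 : ℝ) m, B s ≤ Bt s := by
  -- positivity of C
  have hωpos : 0 < ωN := by
    rw [hωN]
    exact ENNReal.toReal_pos (Metric.measure_ball_pos _ _ one_pos).ne'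
      measure_ball_lt_top.ne
  have hCpos : 0 < C := by
    rw [hC]
    have hN0 : (0:ℝ) < (N:ℝ) := by
      have : (2:ℝ) ≤ (N:ℝ) := by exact_mod_cast hN
      linarith
    exact mul_pos hΛ (Real.rpow_pos_of_pos
      (mul_pos hN0 (Real.rpow_pos_of_pos hωpos _)) _)
  by_contra hcon
  push_neg at hcon
  obtain ⟨s₀, hs₀mem, hs₀⟩ := hcon
  set w : ℝ → ℝ := fun s => B s - Bt s with hw
  have hwcont : ContinuousOn w (Icc 0 m) := fun s hs =>
    ((hB s hs).continuousWithinAt.sub (hBt s hs).continuousWithinAt)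
  obtain ⟨c, hcmem, hcmax⟩ :=
    isCompact_Icc.exists_isMaxOn (nonempty_Icc.2 hm.le) hwcont
  have hwc : 0 < w c := lt_of_lt_of_le (sub_pos.2 hs₀) (hcmax hs₀mem)
  have hc0 : 0 < c := by
    rcases hcmem.1.lt_or_eq with h | h
    · exact h
    · exfalso
      rw [← h] at hwc
      simp only [hw, hB0, hBt0, sub_zero] at hwc
      exact lt_irrefl _ hwc
  -- B' c = Bt' c
  have hBc : B' c = Bt' c := by
    rcases eq_or_lt_of_le hcmem.2 with hcm | hcm
    · rw [hcm, hB'm, hBt'm]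
    · have hnb : Icc (0:ℝ) m ∈ 𝓝 c := Icc_mem_nhds hc0 hcm
      have hdw : HasDerivAt w (B' c - Bt' c) c :=
        ((hB c hcmem).hasDerivAt hnb).sub ((hBt c hcmem).hasDerivAt hnb)
      have hz := (hcmax.isLocalMax hnb).hasDerivAt_eq_zero hdw
      linarith
  -- s₁ : last zero of w before c
  set S : Set ℝ := Icc 0 c ∩ w ⁻¹' (Iic 0) with hS
  have hScl : IsClosed S :=
    (hwcont.mono (Icc_subset_Icc le_rfl hcmem.2)).preimage_isClosed_of_isClosed
      isClosed_Icc isClosed_Iic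
  have hSne : S.Nonempty :=
    ⟨0, ⟨le_rfl, hc0.le⟩, by simp [hw, hB0, hBt0]⟩
  have hSbdd : BddAbove S := ⟨c, fun z hz => hz.1.2⟩
  set s₁ := sSup S with hs₁def
  have hs₁S : s₁ ∈ S := hScl.csSup_mem hSne hSbdd
  have hs₁0 : 0 ≤ s₁ := hs₁S.1.1
  have hs₁c : s₁ ≤ c := hs₁S.1.2
  have hws₁ : w s₁ ≤ 0 := hs₁S.2
  have hs₁ltc : s₁ < c := hs₁c.lt_of_ne (fun h => by rw [h] at hws₁; linarith)
  have hwpos : ∀ s, s₁ < s → s ≤ c → 0 < w s := by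
    intro s h1 h2
    by_contra hno
    push_neg at hno
    have hmem : s ∈ S := ⟨⟨hs₁0.trans h1.le, h2⟩, hno⟩
    exact absurd (le_csSup hSbdd hmem) (not_le.2 h1)
  have hIoosub : Ioo s₁ c ⊆ Ioo 0 m := fun z hz =>
    ⟨lt_of_le_of_lt hs₁0 hz.1, lt_of_lt_of_le hz.2 hcmem.2⟩
  -- the comparison function G
  set G : ℝ → ℝ := fun s => γ (B' s) - γt (Bt' s) with hG
  have hGcont : ContinuousOn G (Icc 0 m) :=
    (hγcont.comp_continuousOn hB'cont).sub (hγtcont.comp_continuousOn hBt'cont)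
  -- master a.e. statement
  have master : ∀ᵐ s ∂(volume.restrict (Ioo 0 m)),
      HasDerivAt G (D s - Dt s) s ∧ (s₁ < s → s < c → 0 ≤ D s - Dt s) := by
    filter_upwards [hD, hDt, hineq, heq, ae_restrict_mem measurableSet_Ioo]
      with s h1 h2 h3 h4 h5
    refine ⟨h1.1.sub h2.1, ?_⟩
    intro hlt1 hlt2
    have hBge : Bt s ≤ B s := by
      have := hwpos s hlt1 hlt2.le
      simp only [hw, sub_pos] at this
      exact this.le
    have hspos : 0 < s := h5.1
    have hsp : 0 < C * s ^ (pbar * ((N:ℝ) - 1) / N) :=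
      mul_pos hCpos (Real.rpow_pos_of_pos hspos _)
    have hFs : F s ≤ Ft s := hFle s ⟨hspos.le, h5.2.le⟩
    have hchain : C * s ^ (pbar * ((N:ℝ) - 1) / N) * (-(D s)) ^ (pbar - 1)
        ≤ C * s ^ (pbar * ((N:ℝ) - 1) / N) * (-(Dt s)) ^ (pbar - 1) := by linarith
    have hle : (-(D s)) ^ (pbar - 1) ≤ (-(Dt s)) ^ (pbar - 1) :=
      le_of_mul_le_mul_left hchain hsp
    by_contra hneg
    push_neg at hneg
    have h7 : (-(Dt s)) ^ (pbar - 1) < (-(D s)) ^ (pbar - 1) :=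
      Real.rpow_lt_rpow (by linarith [h2.2]) (by linarith) (by linarith)
    linarith
  -- forward monotonicity of G on (s₁, c)
  have hGmono : ∀ x y, s₁ < x → x ≤ y → y < c → G x ≤ G y := by
    intro x y hx hxy hyc
    have hy0 : 0 < x := lt_of_le_of_lt hs₁0 hx
    have hym : y < m := lt_of_lt_of_le hyc hcmem.2
    refine forward_mono_aux hxy (hGcont.mono ?_) ?_
    · exact Icc_subset_Icc hy0.le hym.le
    · intro u hxu huy
      have hu0 : 0 < u := lt_of_lt_of_le hy0 hxu
      have hum : u < m := lt_trans (lt_of_lt_of_le huy (le_refl y)) hym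
      have huIoo : u ∈ Ioo (0:ℝ) m := ⟨hu0, hum⟩
      obtain ⟨ε₁, hε₁, K₁, hK₁⟩ := hlocLip u huIoo
      obtain ⟨ε₂, hε₂, K₂, hK₂⟩ := hlocLipt u huIoo
      set ε := min ε₁ ε₂ with hεdef
      have hεpos : 0 < ε := lt_min hε₁ hε₂
      set z := min (u + ε / 2) y with hzdef
      have huz : u < z := lt_min (by linarith) huy
      have hzy : z ≤ y := min_le_right _ _
      have hzu : z ≤ u + ε / 2 := min_le_left _ _
      have hsub₁ : Icc u z ⊆ Ioo (u - ε₁) (u + ε₁) ∩ Ioo 0 m := by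
        intro p hp
        have hε1 : ε ≤ ε₁ := min_le_left _ _
        refine ⟨⟨by linarith [hp.1], by linarith [hp.2]⟩,
          ⟨by linarith [hp.1], ?_⟩⟩
        have : p ≤ y := le_trans hp.2 hzy
        linarith
      have hsub₂ : Icc u z ⊆ Ioo (u - ε₂) (u + ε₂) ∩ Ioo 0 m := by
        intro p hp
        have hε2 : ε ≤ ε₂ := min_le_right _ _
        refine ⟨⟨by linarith [hp.1], by linarith [hp.2]⟩,
          ⟨by linarith [hp.1], ?_⟩⟩
        have : p ≤ y := le_trans hp.2 hzy
        linarith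
      have hlipG : LipschitzOnWith (K₁ + K₂) G (Icc u z) := by
        rw [lipschitzOnWith_iff_dist_le_mul]
        intro p hp q hq
        have e1 := lipschitzOnWith_iff_dist_le_mul.1 hK₁ p (hsub₁ hp) q (hsub₁ hq)
        have e2 := lipschitzOnWith_iff_dist_le_mul.1 hK₂ p (hsub₂ hp) q (hsub₂ hq)
        calc dist (G p) (G q)
            ≤ dist (γ (B' p)) (γ (B' q)) + dist (γt (Bt' p)) (γt (Bt' q)) :=
              dist_sub_sub_le _ _ _ _
        _ ≤ (K₁ : ℝ) * dist p q + (K₂ : ℝ) * dist p q := add_le_add e1 e2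
        _ = ((K₁ + K₂ : ℝ≥0) : ℝ) * dist p q := by push_cast; ring
      have haeuz : ∀ᵐ s ∂(volume.restrict (Ioo u z)),
          HasDerivAt G (D s - Dt s) s ∧ 0 ≤ D s - Dt s := by
        have hsubst : Ioo u z ⊆ Ioo 0 m := fun p hp =>
          ⟨lt_trans hu0 hp.1, lt_of_lt_of_le hp.2 (hzy.trans hym.le)⟩
        filter_upwards [ae_restrict_of_ae_restrict_of_subset hsubst master,
          ae_restrict_mem measurableSet_Ioo] with s h1 h2
        refine ⟨h1.1, h1.2 ?_ ?_⟩
        · exact lt_trans (lt_of_lt_of_le hx hxu) h2.1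
        · exact lt_of_lt_of_le h2.2 ((hzy.trans hyc.le))
      exact ⟨z, huz, hzy, lip_ae_mono_aux huz.le hlipG haeuz⟩
  -- extend to c by continuity
  have hGc : ∀ x, x ∈ Ioo s₁ c → G x ≤ G c := by
    intro x hx
    have hTc : Tendsto G (𝓝[<] c) (𝓝 (G c)) := by
      have hcw : ContinuousWithinAt G (Icc 0 m) c := hGcont c ⟨hc0.le, hcmem.2⟩
      refine hcw.tendsto.mono_left (nhdsWithin_le_of_mem ?_)
      refine mem_of_superset (Ioo_mem_nhdsLT_of_mem (⟨hx.2, le_rfl⟩ : c ∈ Ioc x c)) ?_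
      intro p hp
      exact ⟨le_of_lt (lt_of_le_of_lt hs₁0 (lt_of_le_of_lt hx.1.le hp.1)),
        le_trans hp.2.le hcmem.2⟩
    refine ge_of_tendsto hTc ?_
    filter_upwards [Ioo_mem_nhdsLT_of_mem (⟨hx.2, le_rfl⟩ : c ∈ Ioc x c)] with y hy
    exact hGmono x y hx.1 hy.1.le hy.2
  -- key claim : B' ≤ Bt' on (s₁, c)
  have hKey : ∀ x ∈ Ioo s₁ c, B' x ≤ Bt' x := by
    intro x hx
    by_contra hgt
    push_neg at hgt
    have hxm : x ∈ Icc (0:ℝ) m :=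
      ⟨hs₁0.trans hx.1.le, (hx.2.le.trans hcmem.2)⟩
    have hB'xc : B' c ≤ B' x := hB'anti hxm hcmem hx.2.le
    have hdelta : ∀ v a : ℝ, v ≤ a → γ v - γt v ≤ γ a - γt a := by
      intro v a hva
      have h1 : |γt a - γt v| ≤ |γ a - γ v| := by
        have := hρ.dist_le_mul (γ a) (γ v)
        rw [hcomp]
        simpa [Real.dist_eq] using this
      have h2 : γ v ≤ γ a := hγmono.monotone hva
      have h3 : γt a - γt v ≤ γ a - γ v := by
        calc γt a - γt v ≤ |γt a - γt v| := le_abs_self _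
        _ ≤ |γ a - γ v| := h1
        _ = γ a - γ v := abs_of_nonneg (by linarith)
      linarith
    have h4 : G c = γ (B' c) - γt (B' c) := by
      simp only [hG]
      rw [← hBc]
    have h5 : γt (Bt' x) < γt (B' x) := hγtmono hgt
    have h6 : G x ≤ G c := hGc x hx
    have h7 : γ (B' c) - γt (B' c) ≤ γ (B' x) - γt (B' x) := hdelta _ _ hB'xc
    have h8 : G x = γ (B' x) - γt (Bt' x) := rfl
    rw [h8, h4] at h6
    linarith
  -- conclude : w is antitone on [s₁, c]
  have hanti : AntitoneOn w (Icc s₁ c) := by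
    apply antitoneOn_of_deriv_nonpos (convex_Icc s₁ c)
    · exact hwcont.mono (Icc_subset_Icc hs₁0 hcmem.2)
    · intro p hp
      rw [interior_Icc] at hp
      have hpIoo : p ∈ Ioo (0:ℝ) m := hIoosub hp
      have hnb : Icc (0:ℝ) m ∈ 𝓝 p := Icc_mem_nhds hpIoo.1 hpIoo.2
      exact (((hB p ⟨hpIoo.1.le, hpIoo.2.le⟩).hasDerivAt hnb).sub
        ((hBt p ⟨hpIoo.1.le, hpIoo.2.le⟩).hasDerivAt hnb)).differentiableAt.differentiableWithinAt
    · intro p hp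
      rw [interior_Icc] at hp
      have hpIoo : p ∈ Ioo (0:ℝ) m := hIoosub hp
      have hnb : Icc (0:ℝ) m ∈ 𝓝 p := Icc_mem_nhds hpIoo.1 hpIoo.2
      have hd : HasDerivAt w (B' p - Bt' p) p :=
        ((hB p ⟨hpIoo.1.le, hpIoo.2.le⟩).hasDerivAt hnb).sub
          ((hBt p ⟨hpIoo.1.le, hpIoo.2.le⟩).hasDerivAt hnb)
      rw [hd.deriv]
      linarith [hKey p hp]
  have hfin : w c ≤ w s₁ :=
    hanti (left_mem_Icc.2 hs₁c) (right_mem_Icc.2 hs₁c) hs₁c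
  linarith
end
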